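/- LPostQAL ⊆ uQAL: if L ⊆ Σ* is recognized with some error bound ε < 1/2 by a Latvian RT-PostQFA, then there exist an RT-QFA and a cutpoint λ ∈ ℝ such that either L = {w : f^a(w) > λ} or L = {w : f^a(w) ≥ λ}; indeed, if the flag τ = A the recognition is with nonstrict cutpoint, and if τ = R it is with strict cutpoint. -/

import Mathlib

noncomputable section

/-- The input alphabet extended with the two endmarkers `¢` and `$`. -/
inductive ESym (α : Type) : Type where
  | cent : ESym α
  | dollar : ESym α
  | letter : α → ESym α

/-- The diagonal 0-1 projection matrix supported on a set of states. -/
def projM {m : ℕ} (S : Finset (Fin m)) : Matrix (Fin m) (Fin m) ℂ :=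
  Matrix.diagonal (fun i => if i ∈ S then 1 else 0)

/-- The density matrix obtained by applying, in order, the Kraus families for
`¢`, the letters of `w`, and `$` to the initial density matrix `|q₁⟩⟨q₁|`. -/
def qRun {α : Type} {n : ℕ} {k : ESym α → ℕ}
    (E : ∀ σ : ESym α, Fin (k σ) → Matrix (Fin (n + 1)) (Fin (n + 1)) ℂ)
    (w : List α) : Matrix (Fin (n + 1)) (Fin (n + 1)) ℂ :=
  (ESym.cent :: (w.map ESym.letter ++ [ESym.dollar])).foldl
    (fun ρ σ => ∑ i : Fin (k σ), E σ i * ρ * (E σ i).conjTranspose)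
    (Matrix.single 0 0 1)

/-- A real-time quantum finite automaton with postselection (RT-PostQFA). -/
structure PostQFA (α : Type) where
  n : ℕ
  k : ESym α → ℕ
  E : ∀ σ : ESym α, Fin (k σ) → Matrix (Fin (n + 1)) (Fin (n + 1)) ℂ
  kraus : ∀ σ : ESym α, ∑ i : Fin (k σ), (E σ i).conjTranspose * E σ i = 1
  Qpa : Finset (Fin (n + 1))
  Qpr : Finset (Fin (n + 1))
  disj : Disjoint Qpa Qpr
  postPos : ∀ w : List α,
    0 < ((projM Qpa * qRun E w).trace).re + ((projM Qpr * qRun E w).trace).re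

/-- Acceptance probability before postselection. -/
def PostQFA.pacc {α : Type} (M : PostQFA α) (w : List α) : ℝ :=
  ((projM M.Qpa * qRun M.E w).trace).re

/-- Rejection probability before postselection. -/
def PostQFA.prej {α : Type} (M : PostQFA α) (w : List α) : ℝ :=
  ((projM M.Qpr * qRun M.E w).trace).re

/-- Normalized acceptance probability of an RT-PostQFA. -/
def PostQFA.fa {α : Type} (M : PostQFA α) (w : List α) : ℝ :=
  M.pacc w / (M.pacc w + M.prej w)

/-- Recognition of a language with error bound `ε`. -/
def PostQFA.Recognizes {α : Type} (M : PostQFA α) (L : Set (List α)) (ε : ℝ) : Prop :=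
  ∀ w : List α, (w ∈ L → 1 - ε ≤ M.fa w) ∧ (w ∉ L → M.fa w ≤ ε)

/-- The class of languages recognized by RT-PostQFAs with bounded error. -/
def PostQAL {α : Type} (L : Set (List α)) : Prop :=
  ∃ (M : PostQFA α) (ε : ℝ), 0 ≤ ε ∧ ε < 1 / 2 ∧ M.Recognizes L ε

/-- Recognition with zero error: `fa = 1` on members, `fa = 0` on non-members. -/
def PostQFA.RecognizesZero {α : Type} (M : PostQFA α) (L : Set (List α)) : Prop :=
  ∀ w : List α, (w ∈ L → M.fa w = 1) ∧ (w ∉ L → M.fa w = 0)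

/-- The class of languages recognized by RT-PostQFAs with zero error. -/
def ZPostQAL {α : Type} (L : Set (List α)) : Prop :=
  ∃ M : PostQFA α, M.RecognizesZero L

/-- A standard real-time quantum finite automaton (RT-QFA). -/
structure QFA (α : Type) where
  n : ℕ
  k : ESym α → ℕ
  E : ∀ σ : ESym α, Fin (k σ) → Matrix (Fin (n + 1)) (Fin (n + 1)) ℂ
  kraus : ∀ σ : ESym α, ∑ i : Fin (k σ), (E σ i).conjTranspose * E σ i = 1
  Qa : Finset (Fin (n + 1))

/-- Acceptance probability of an RT-QFA. -/
def QFA.fa {α : Type} (M : QFA α) (w : List α) : ℝ :=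
  ((projM M.Qa * qRun M.E w).trace).re

/-- The flag of a Latvian postselection automaton: accept (`A`) or reject (`R`)
with certainty when the postselection probability is zero. -/
inductive PostFlag : Type where
  | A : PostFlag
  | R : PostFlag
deriving DecidableEq

/-- A Latvian RT-PostQFA: an RT-PostQFA without the positivity requirement,
together with a flag `τ ∈ {A, R}`. -/
structure LPostQFA (α : Type) where
  n : ℕ
  k : ESym α → ℕ
  E : ∀ σ : ESym α, Fin (k σ) → Matrix (Fin (n + 1)) (Fin (n + 1)) ℂ
  kraus : ∀ σ : ESym α, ∑ i : Fin (k σ), (E σ i).conjTranspose * E σ i = 1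
  Qpa : Finset (Fin (n + 1))
  Qpr : Finset (Fin (n + 1))
  disj : Disjoint Qpa Qpr
  tau : PostFlag

/-- Acceptance probability before postselection. -/
def LPostQFA.pacc {α : Type} (M : LPostQFA α) (w : List α) : ℝ :=
  ((projM M.Qpa * qRun M.E w).trace).re

/-- Rejection probability before postselection. -/
def LPostQFA.prej {α : Type} (M : LPostQFA α) (w : List α) : ℝ :=
  ((projM M.Qpr * qRun M.E w).trace).re

/-- Acceptance probability of a Latvian RT-PostQFA. -/
def LPostQFA.fa {α : Type} (M : LPostQFA α) (w : List α) : ℝ :=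
  if 0 < M.pacc w + M.prej w then M.pacc w / (M.pacc w + M.prej w)
  else if M.tau = PostFlag.A then 1 else 0

/-- Recognition of a language with error bound `ε`. -/
def LPostQFA.Recognizes {α : Type} (M : LPostQFA α) (L : Set (List α)) (ε : ℝ) : Prop :=
  ∀ w : List α, (w ∈ L → 1 - ε ≤ M.fa w) ∧ (w ∉ L → M.fa w ≤ ε)

/-- Recognition with zero error: `fa = 1` on members, `fa = 0` on non-members. -/
def LPostQFA.RecognizesZero {α : Type} (M : LPostQFA α) (L : Set (List α)) : Prop :=
  ∀ w : List α, (w ∈ L → M.fa w = 1) ∧ (w ∉ L → M.fa w = 0)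

/-!
Run two copies of the automaton side by side, entering each one with probability `1/2` when
reading `¢` (Kraus operators scaled by `1/√2`), and accept in the first copy on `Q_pa` and in the
second on the complement of `Q_pr`. As the final density matrix has trace one, this RT-QFA
accepts with probability `(1 + p^a(w) - p^r(w)) / 2`. With error bound below `1/2`, the Latvian
machine accepts `w` iff `p^r(w) < p^a(w)` as long as `p^a(w) + p^r(w) > 0`; otherwise both
vanish, the QFA sits exactly on the cutpoint `1/2`, and the flag decides: the cutpoint is
nonstrict for `A` and strict for `R`.
-/
open Matrix
open scoped ComplexOrder

section Kraus

variable {m m' ι ι' : Type*} [Fintype m] [Fintype m'] [Fintype ι] [Fintype ι']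

def krausApply (E : ι → Matrix m m ℂ) (ρ : Matrix m m ℂ) : Matrix m m ℂ :=
  ∑ i, E i * ρ * (E i)ᴴ

theorem trace_krausApply [DecidableEq m] {E : ι → Matrix m m ℂ} (hE : ∑ i, (E i)ᴴ * E i = 1)
    (ρ : Matrix m m ℂ) : (krausApply E ρ).trace = ρ.trace := by
  calc (krausApply E ρ).trace = ∑ i, ((E i)ᴴ * E i * ρ).trace := by
        rw [krausApply, trace_sum]
        refine Finset.sum_congr rfl fun i _ => ?_
        rw [trace_mul_comm, Matrix.mul_assoc]
    _ = ρ.trace := by rw [← trace_sum, ← Finset.sum_mul, hE, Matrix.one_mul]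

theorem Matrix.PosSemidef.krausApply {ρ : Matrix m m ℂ} (hρ : ρ.PosSemidef)
    (E : ι → Matrix m m ℂ) : (krausApply E ρ).PosSemidef :=
  posSemidef_sum _ fun i _ => hρ.mul_mul_conjTranspose_same (E i)

theorem krausApply_smul (E : ι → Matrix m m ℂ) (r : ℝ) (ρ : Matrix m m ℂ) :
    krausApply E (r • ρ) = r • krausApply E ρ := by
  simp only [krausApply, Finset.smul_sum, Matrix.mul_smul, Matrix.smul_mul]

theorem krausApply_comp_equiv (E : ι → Matrix m m ℂ) (e : ι' ≃ ι) :
    krausApply (E ∘ e) = krausApply E :=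
  funext fun _ => Fintype.sum_equiv e _ _ fun _ => rfl

theorem krausApply_reindex (e : m ≃ m') (E : ι → Matrix m m ℂ)
    (ρ : Matrix m m ℂ) :
    krausApply (fun i => reindex e e (E i)) (reindex e e ρ) = reindex e e (krausApply E ρ) := by
  change _ = reindexRingEquiv ℂ e (∑ i, _)
  simp only [map_sum, map_mul, coe_reindexRingEquiv, conjTranspose_reindex, krausApply]

end Kraus

section Run

variable {α : Type} {n : ℕ} {k : ESym α → ℕ}
  (E : ∀ σ : ESym α, Fin (k σ) → Matrix (Fin (n + 1)) (Fin (n + 1)) ℂ)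

theorem qRun_eq_foldl (w : List α) :
    qRun E w = (ESym.cent :: (w.map ESym.letter ++ [ESym.dollar])).foldl
      (fun ρ σ => krausApply (E σ) ρ) (single 0 0 1) :=
  rfl

theorem trace_qRun (hE : ∀ σ, ∑ i, (E σ i)ᴴ * E σ i = 1) (w : List α) :
    (qRun E w).trace = 1 := by
  rw [qRun_eq_foldl]
  refine List.foldlRecOn (motive := fun ρ : Matrix _ _ ℂ => ρ.trace = 1) _ _ ?_
    fun ρ hρ σ _ => ?_
  · simp [trace, single]
  · rw [trace_krausApply (hE σ), hρ]

theorem qRun_posSemidef (w : List α) : (qRun E w).PosSemidef := by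
  rw [qRun_eq_foldl]
  refine List.foldlRecOn (motive := PosSemidef) _ _ ?_ fun ρ hρ σ _ => hρ.krausApply (E σ)
  simpa using posSemidef_conjTranspose_mul_self (single (0 : Fin (n + 1)) 0 (1 : ℂ))

end Run

section Projection

variable {n : ℕ}

theorem trace_projM_mul (S : Finset (Fin n)) (A : Matrix (Fin n) (Fin n) ℂ) :
    (projM S * A).trace = ∑ q ∈ S, A q q := by
  simp [trace, projM, Finset.sum_ite_mem]

theorem projM_compl (S : Finset (Fin n)) : projM Sᶜ = 1 - projM S := by
  rw [projM, projM, ← diagonal_one, diagonal_sub]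
  congr 1 with i
  by_cases hi : i ∈ S <;> simp [hi]

theorem re_trace_projM_mul_nonneg (S : Finset (Fin n)) {ρ : Matrix (Fin n) (Fin n) ℂ}
    (hρ : ρ.PosSemidef) : 0 ≤ ((projM S * ρ).trace).re := by
  rw [trace_projM_mul]
  exact (Complex.le_def.mp (Finset.sum_nonneg fun q _ => hρ.diag_nonneg (i := q))).1

end Projection

theorem Matrix.sum_fromBlocks {κ l m n o R : Type*} [AddCommMonoid R] (s : Finset κ)
    (A : κ → Matrix n l R) (B : κ → Matrix n m R) (C : κ → Matrix o l R)
    (D : κ → Matrix o m R) :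
    ∑ i ∈ s, fromBlocks (A i) (B i) (C i) (D i) =
      fromBlocks (∑ i ∈ s, A i) (∑ i ∈ s, B i) (∑ i ∈ s, C i) (∑ i ∈ s, D i) := by
  ext (i | i) (j | j) <;> simp [Matrix.sum_apply]

section CoinFlip

variable {m ι : Type*} [Fintype m] [Fintype ι]

theorem krausApply_fromBlocks_diag (E : ι → Matrix m m ℂ) (X : Matrix m m ℂ) :
    krausApply (fun i => fromBlocks (E i) 0 0 (E i)) (fromBlocks X 0 0 X) =
      fromBlocks (krausApply E X) 0 0 (krausApply E X) := by
  simp [krausApply, fromBlocks_conjTranspose, fromBlocks_multiply, sum_fromBlocks]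

theorem inv_sqrt_two_mul_self : (√2)⁻¹ * (√2)⁻¹ = (2⁻¹ : ℝ) := by
  rw [← mul_inv, Real.mul_self_sqrt zero_le_two]

variable [DecidableEq m]

/-- The last operator only completes the family: the second copy is still empty when `¢` is
read. -/
def coinFlipKraus (E : ι → Matrix m m ℂ) : (ι ⊕ ι) ⊕ Unit → Matrix (m ⊕ m) (m ⊕ m) ℂ
  | .inl (.inl i) => (√2)⁻¹ • fromBlocks (E i) 0 0 0
  | .inl (.inr i) => (√2)⁻¹ • fromBlocks 0 0 (E i) 0
  | .inr () => fromBlocks 0 0 0 1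

theorem sum_conjTranspose_mul_coinFlipKraus {E : ι → Matrix m m ℂ}
    (hE : ∑ i, (E i)ᴴ * E i = 1) :
    ∑ j, (coinFlipKraus E j)ᴴ * coinFlipKraus E j = 1 := by
  norm_num [Fintype.sum_sum_type, coinFlipKraus, fromBlocks_conjTranspose, fromBlocks_multiply,
    smul_smul, inv_sqrt_two_mul_self, ← Finset.smul_sum, sum_fromBlocks, hE, fromBlocks_smul,
    fromBlocks_add, fromBlocks_one, ← add_smul]

theorem krausApply_coinFlipKraus (E : ι → Matrix m m ℂ) (X : Matrix m m ℂ) :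
    krausApply (coinFlipKraus E) (fromBlocks X 0 0 0) =
      (2⁻¹ : ℝ) • fromBlocks (krausApply E X) 0 0 (krausApply E X) := by
  simp [krausApply, Fintype.sum_sum_type, coinFlipKraus, fromBlocks_conjTranspose,
    fromBlocks_multiply, smul_smul, inv_sqrt_two_mul_self, ← Finset.smul_sum, sum_fromBlocks,
    fromBlocks_smul, fromBlocks_add]

theorem sum_conjTranspose_mul_fromBlocks_diag {E : ι → Matrix m m ℂ}
    (hE : ∑ i, (E i)ᴴ * E i = 1) :
    ∑ i, (fromBlocks (E i) 0 0 (E i))ᴴ * fromBlocks (E i) 0 0 (E i) = 1 := by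
  simp [fromBlocks_conjTranspose, fromBlocks_multiply, sum_fromBlocks, hE]

end CoinFlip

section Doubling

variable {α : Type} {n : ℕ} {k : ESym α → ℕ}
  (E : ∀ σ : ESym α, Fin (k σ) → Matrix (Fin (n + 1)) (Fin (n + 1)) ℂ)

def doubledCount (k : ESym α → ℕ) : ESym α → ℕ
  | .cent => Fintype.card ((Fin (k .cent) ⊕ Fin (k .cent)) ⊕ Unit)
  | σ => k σ

def doubledKraus :
    ∀ σ : ESym α, Fin (doubledCount k σ) →
      Matrix (Fin (n + 1) ⊕ Fin (n + 1)) (Fin (n + 1) ⊕ Fin (n + 1)) ℂ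
  | .cent => coinFlipKraus (E .cent) ∘ (Fintype.equivFin _).symm
  | .dollar => fun i => fromBlocks (E .dollar i) 0 0 (E .dollar i)
  | .letter a => fun i => fromBlocks (E (.letter a) i) 0 0 (E (.letter a) i)

theorem sum_conjTranspose_mul_doubledKraus (hE : ∀ σ, ∑ i, (E σ i)ᴴ * E σ i = 1)
    (σ : ESym α) : ∑ i, (doubledKraus E σ i)ᴴ * doubledKraus E σ i = 1 := by
  cases σ with
  | cent =>
    rw [← sum_conjTranspose_mul_coinFlipKraus (hE .cent)]
    exact Fintype.sum_equiv (Fintype.equivFin _).symm _ _ fun _ => rfl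
  | dollar => exact sum_conjTranspose_mul_fromBlocks_diag (hE .dollar)
  | letter a => exact sum_conjTranspose_mul_fromBlocks_diag (hE (.letter a))

theorem krausApply_doubledKraus_cent :
    krausApply (doubledKraus E .cent) = krausApply (coinFlipKraus (E .cent)) :=
  krausApply_comp_equiv _ _

theorem foldl_krausApply_doubledKraus (w : List α) :
    (ESym.cent :: (w.map ESym.letter ++ [ESym.dollar])).foldl
        (fun ρ σ => krausApply (doubledKraus E σ) ρ) (single (.inl 0) (.inl 0) 1) =
      (2⁻¹ : ℝ) • fromBlocks (qRun E w) 0 0 (qRun E w) := by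
  have hinit : (single (.inl 0) (.inl 0) 1 :
      Matrix (Fin (n + 1) ⊕ Fin (n + 1)) (Fin (n + 1) ⊕ Fin (n + 1)) ℂ) =
      fromBlocks (single 0 0 1) 0 0 0 := by
    ext (i | i) (j | j) <;> simp [single_apply]
  have hrest : ∀ σ ∈ w.map ESym.letter ++ [ESym.dollar],
      krausApply (doubledKraus E σ) = krausApply fun i => fromBlocks (E σ i) 0 0 (E σ i) := by
    simp only [List.mem_append, List.mem_map, List.mem_singleton]
    rintro σ (⟨a, -, rfl⟩ | rfl) <;> rfl
  rw [List.foldl_cons, hinit, krausApply_doubledKraus_cent, krausApply_coinFlipKraus,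
    List.foldl_ext _ (fun ρ σ => krausApply (fun i => fromBlocks (E σ i) 0 0 (E σ i)) ρ) _
      fun ρ σ hσ => congrFun (hrest σ hσ) ρ,
    List.foldl_hom (fun X => (2⁻¹ : ℝ) • fromBlocks X 0 0 X) fun X σ => by
      rw [krausApply_smul, krausApply_fromBlocks_diag],
    qRun_eq_foldl, List.foldl_cons]

def doubledIndex (n : ℕ) : Fin (n + 1) ⊕ Fin (n + 1) ≃ Fin (n + 1 + n + 1) :=
  finSumFinEquiv

theorem doubledIndex_inl_zero : doubledIndex n (.inl 0) = 0 :=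
  Fin.ext (by simp [doubledIndex])

def doubledQFA (hE : ∀ σ, ∑ i, (E σ i)ᴴ * E σ i = 1) (S T : Finset (Fin (n + 1))) :
    QFA α where
  n := n + 1 + n
  k := doubledCount k
  E σ i := reindex (doubledIndex n) (doubledIndex n) (doubledKraus E σ i)
  kraus σ := by
    rw [← map_one (reindexRingEquiv ℂ (doubledIndex n)),
      ← sum_conjTranspose_mul_doubledKraus E hE σ, map_sum]
    simp only [map_mul, coe_reindexRingEquiv, conjTranspose_reindex]
  Qa := (S.disjSum T).map (doubledIndex n).toEmbedding

variable (hE : ∀ σ, ∑ i, (E σ i)ᴴ * E σ i = 1) (S T : Finset (Fin (n + 1)))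

theorem qRun_doubledQFA (w : List α) :
    qRun (doubledQFA E hE S T).E w = reindex (doubledIndex n) (doubledIndex n)
      ((2⁻¹ : ℝ) • fromBlocks (qRun E w) 0 0 (qRun E w)) := by
  have hinit : (single 0 0 1 : Matrix (Fin (n + 1 + n + 1)) (Fin (n + 1 + n + 1)) ℂ) =
      reindex (doubledIndex n) (doubledIndex n) (single (.inl 0) (.inl 0) 1) := by
    simp [reindex_apply, doubledIndex_inl_zero]
  change qRun (fun σ i => reindex (doubledIndex n) (doubledIndex n) (doubledKraus E σ i)) w = _
  rw [qRun_eq_foldl, hinit, List.foldl_hom _ fun ρ σ => krausApply_reindex _ _ ρ,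
    foldl_krausApply_doubledKraus]

theorem fa_doubledQFA (w : List α) :
    (doubledQFA E hE S T).fa w =
      (((projM S * qRun E w).trace).re + ((projM T * qRun E w).trace).re) / 2 := by
  rw [QFA.fa, trace_projM_mul, trace_projM_mul, trace_projM_mul, qRun_doubledQFA]
  simp only [doubledQFA, Finset.sum_map, Finset.sum_disjSum, Equiv.coe_toEmbedding, reindex_apply,
    submatrix_apply, Equiv.symm_apply_apply, Matrix.smul_apply, fromBlocks_apply₁₁,
    fromBlocks_apply₂₂, ← Finset.smul_sum, Complex.smul_re, smul_eq_mul, Complex.add_re]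
  ring

end Doubling

namespace LPostQFA

variable {α : Type} (N : LPostQFA α)

theorem pacc_nonneg (w : List α) : 0 ≤ N.pacc w :=
  re_trace_projM_mul_nonneg _ (qRun_posSemidef _ w)

theorem prej_nonneg (w : List α) : 0 ≤ N.prej w :=
  re_trace_projM_mul_nonneg _ (qRun_posSemidef _ w)

theorem exists_QFA_fa_eq : ∃ M : QFA α, ∀ w, M.fa w = (1 + N.pacc w - N.prej w) / 2 :=
  ⟨doubledQFA N.E N.kraus N.Qpa N.Qprᶜ, fun w => by
    rw [fa_doubledQFA, projM_compl, Matrix.sub_mul, Matrix.one_mul, trace_sub, Complex.sub_re,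
      trace_qRun N.E N.kraus, pacc, prej, Complex.one_re]
    ring⟩

variable {N} {L : Set (List α)} {ε : ℝ}

theorem Recognizes.prej_lt_pacc (hrec : N.Recognizes L ε) (hε : ε < 1 / 2) {w : List α}
    (hw : w ∈ L) (hpos : 0 < N.pacc w + N.prej w) : N.prej w < N.pacc w := by
  have h := (hrec w).1 hw
  rw [fa, if_pos hpos, le_div_iff₀ hpos] at h
  nlinarith

theorem Recognizes.pacc_lt_prej (hrec : N.Recognizes L ε) (hε : ε < 1 / 2) {w : List α}
    (hw : w ∉ L) (hpos : 0 < N.pacc w + N.prej w) : N.pacc w < N.prej w := by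
  have h := (hrec w).2 hw
  rw [fa, if_pos hpos, div_le_iff₀ hpos] at h
  nlinarith

theorem Recognizes.mem_iff_prej_le_pacc (hrec : N.Recognizes L ε) (hε : ε < 1 / 2)
    (hτ : N.tau = PostFlag.A) (w : List α) : w ∈ L ↔ N.prej w ≤ N.pacc w := by
  by_cases hpos : 0 < N.pacc w + N.prej w
  · exact ⟨fun hw => (hrec.prej_lt_pacc hε hw hpos).le,
      fun hle => by_contra fun hw => (hrec.pacc_lt_prej hε hw hpos).not_ge hle⟩
  · have hfa : N.fa w = 1 := by simp [fa, hpos, hτ]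
    have hmem : w ∈ L := by_contra fun hw => by linarith [(hrec w).2 hw]
    exact iff_of_true hmem (by linarith [N.pacc_nonneg w, N.prej_nonneg w])

theorem Recognizes.mem_iff_prej_lt_pacc (hrec : N.Recognizes L ε) (hε : ε < 1 / 2)
    (hτ : N.tau = PostFlag.R) (w : List α) : w ∈ L ↔ N.prej w < N.pacc w := by
  by_cases hpos : 0 < N.pacc w + N.prej w
  · exact ⟨fun hw => hrec.prej_lt_pacc hε hw hpos,
      fun hlt => by_contra fun hw => (hrec.pacc_lt_prej hε hw hpos).not_gt hlt⟩
  · have hfa : N.fa w = 0 := by simp [fa, hpos, hτ]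
    have hmem : w ∉ L := fun hw => by linarith [(hrec w).1 hw]
    exact iff_of_false hmem (by linarith [N.pacc_nonneg w, N.prej_nonneg w])

end LPostQFA

theorem LPostQAL_subset_uQAL_general {α : Type} (L : Set (List α)) (N : LPostQFA α)
    (ε : ℝ) (hε : ε < 1 / 2) (hrec : N.Recognizes L ε) :
    (∃ (M : QFA α) (lam : ℝ),
        L = {w : List α | lam < M.fa w} ∨ L = {w : List α | lam ≤ M.fa w}) ∧
      (N.tau = PostFlag.A → ∃ (M : QFA α) (lam : ℝ), L = {w : List α | lam ≤ M.fa w}) ∧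
      (N.tau = PostFlag.R → ∃ (M : QFA α) (lam : ℝ), L = {w : List α | lam < M.fa w}) := by
  obtain ⟨M, hM⟩ := N.exists_QFA_fa_eq
  have nonstrict (hτ : N.tau = PostFlag.A) : L = {w | 1 / 2 ≤ M.fa w} := Set.ext fun w => by
    rw [hrec.mem_iff_prej_le_pacc hε hτ, Set.mem_ofPred_eq, hM]
    constructor <;> intro <;> linarith
  have strict (hτ : N.tau = PostFlag.R) : L = {w | 1 / 2 < M.fa w} := Set.ext fun w => by
    rw [hrec.mem_iff_prej_lt_pacc hε hτ, Set.mem_ofPred_eq, hM]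
    constructor <;> intro <;> linarith
  refine ⟨?_, fun hτ => ⟨M, 1 / 2, nonstrict hτ⟩, fun hτ => ⟨M, 1 / 2, strict hτ⟩⟩
  cases hτ : N.tau with
  | A => exact ⟨M, 1 / 2, .inr (nonstrict hτ)⟩
  | R => exact ⟨M, 1 / 2, .inl (strict hτ)⟩

/-- `LPostQAL ⊆ uQAL`: a language recognized with error bound `ε < 1/2` by a Latvian
RT-PostQFA is recognized by some RT-QFA with a (strict or nonstrict) cutpoint; moreover,
if the flag is `A` it is recognized with a nonstrict cutpoint, and if the flag is `R`
with a strict cutpoint. -/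
theorem LPostQAL_subset_uQAL {α : Type} [Fintype α] (L : Set (List α)) (N : LPostQFA α)
    (ε : ℝ) (hε0 : 0 ≤ ε) (hε : ε < 1 / 2) (hrec : N.Recognizes L ε) :
    (∃ (M : QFA α) (lam : ℝ),
        L = {w : List α | lam < M.fa w} ∨ L = {w : List α | lam ≤ M.fa w}) ∧
      (N.tau = PostFlag.A → ∃ (M : QFA α) (lam : ℝ), L = {w : List α | lam ≤ M.fa w}) ∧
      (N.tau = PostFlag.R → ∃ (M : QFA α) (lam : ℝ), L = {w : List α | lam < M.fa w}) :=
  LPostQAL_subset_uQAL_general L N ε hε hrec
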